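/- Let P : C^op → InfSL be an elementary doctrine and Q(P) : Q_P^op → InfSL its elementary quotient completion, defined by Q(P)(A,ρ) = Des(ρ) and Q(P)([f]) = P(f). Then Q(P) is well defined (independent of representatives and landing in descent data), is an elementary doctrine with fibered equality δ_{(A,ρ)} = ρ, and has effective quotients: for any Q(P)-equivalence relation σ on (A,ρ), the arrow [id_A] : (A,ρ) → (A,σ) is an effective quotient arrow. -/

import Mathlib

open CategoryTheory CategoryTheory.Limits Opposite

noncomputable section

universe w v u

namespace DoctrinePaper

variable {C : Type u} [Category.{v} C] [HasFiniteProducts C]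

/-- The fiber of a primary doctrine `P : Cᵒᵖ ⥤ SemilatInfCat` over an object `A`. -/
abbrev Fib (P : Cᵒᵖ ⥤ SemilatInfCat.{w}) (A : C) : Type w :=
  ↥(P.obj (op A))

/-- Reindexing along an arrow `f : A ⟶ B`. -/
def rmap (P : Cᵒᵖ ⥤ SemilatInfCat.{w}) {A B : C} (f : A ⟶ B) :
    Fib P B → Fib P A :=
  fun x => (P.map f.op) x

variable (P : Cᵒᵖ ⥤ SemilatInfCat.{w})

/-- An elementary doctrine: fibered equalities `δ A ∈ P (A ⨯ A)` such that
`E_e(α) = P⟨pr1,pr2⟩(α) ⊓ P⟨pr2,pr3⟩(δ A)` is left adjoint to reindexing along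
`e = ⟨pr1,pr2,pr2⟩ : X ⨯ A ⟶ (X ⨯ A) ⨯ A`. -/
structure IsElementary where
  δ : ∀ A : C, Fib P (A ⨯ A)
  adj :
    ∀ (X A : C) (α : Fib P (X ⨯ A)) (β : Fib P ((X ⨯ A) ⨯ A)),
      (rmap P (prod.fst : (X ⨯ A) ⨯ A ⟶ X ⨯ A) α ⊓
          rmap P (prod.lift (prod.fst ≫ prod.snd) prod.snd : (X ⨯ A) ⨯ A ⟶ A ⨯ A) (δ A) ≤ β)
        ↔ α ≤ rmap P (prod.lift (𝟙 (X ⨯ A)) prod.snd : X ⨯ A ⟶ (X ⨯ A) ⨯ A) β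

/-- A `P`-equivalence relation over `A`. -/
structure IsEqRel (hE : IsElementary P) {A : C} (ρ : Fib P (A ⨯ A)) : Prop where
  refl : hE.δ A ≤ ρ
  symm : ρ = rmap P (prod.lift prod.snd prod.fst : A ⨯ A ⟶ A ⨯ A) ρ
  trans :
    rmap P (prod.fst : (A ⨯ A) ⨯ A ⟶ A ⨯ A) ρ ⊓
        rmap P (prod.lift (prod.fst ≫ prod.snd) prod.snd : (A ⨯ A) ⨯ A ⟶ A ⨯ A) ρ ≤
      rmap P (prod.lift (prod.fst ≫ prod.fst) prod.snd : (A ⨯ A) ⨯ A ⟶ A ⨯ A) ρ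

/-- An elementary existential doctrine, together with the induced left adjoints
`∃_f` along all arrows, satisfying the adjunction law, Frobenius reciprocity, and
the Beck–Chevalley condition along pullbacks of projections. -/
structure IsExistential extends IsElementary P where
  E : ∀ {A B : C}, (A ⟶ B) → Fib P A → Fib P B
  adjE : ∀ {A B : C} (f : A ⟶ B) (α : Fib P A) (β : Fib P B),
    E f α ≤ β ↔ α ≤ rmap P f β
  frobenius : ∀ {A B : C} (f : A ⟶ B) (α : Fib P A) (β : Fib P B),
    E f (α ⊓ rmap P f β) = E f α ⊓ β
  beckChevalley : ∀ {B A A' : C} (f : A' ⟶ A) (β : Fib P (B ⨯ A)),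
    E (prod.snd : B ⨯ A' ⟶ A') (rmap P (prod.map (𝟙 B) f) β) =
      rmap P f (E (prod.snd : B ⨯ A ⟶ A) β)

/-- Descent data for a relation `ρ` over `A`. -/
def Des {A : C} (ρ : Fib P (A ⨯ A)) : Set (Fib P A) :=
  {α | rmap P (prod.fst : A ⨯ A ⟶ A) α ⊓ ρ ≤ rmap P (prod.snd : A ⨯ A ⟶ A) α}

/-- Comprehensive diagonals: `f = g` iff `⊤ = P⟨f,g⟩(δ)`. -/
def ComprehensiveDiagonals (hE : IsElementary P) : Prop :=
  ∀ {X A : C} (f g : X ⟶ A), f = g ↔ rmap P (prod.lift f g) (hE.δ A) = ⊤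

/-- (Weak) comprehension structure. -/
structure Comprehension where
  cObj : ∀ {A : C}, Fib P A → C
  cArr : ∀ {A : C} (α : Fib P A), cObj α ⟶ A
  cTop : ∀ {A : C} (α : Fib P A), rmap P (cArr α) α = ⊤
  cUniv : ∀ {A : C} (α : Fib P A) {Y : C} (f : Y ⟶ A),
    rmap P f α = ⊤ → ∃ k : Y ⟶ cObj α, k ≫ cArr α = f

/-- Full comprehension. -/
def Comprehension.Full (hC : Comprehension P) : Prop :=
  ∀ {A : C} (α β : Fib P A), α ≤ β ↔ rmap P (hC.cArr α) β = ⊤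

/-- Strong comprehension: comprehension arrows are monic. -/
def Comprehension.Strong (hC : Comprehension P) : Prop :=
  ∀ {A : C} (α : Fib P A), Mono (hC.cArr α)

/-- `P`-injective arrow. -/
def PInj (hE : IsElementary P) {X A : C} (f : X ⟶ A) : Prop :=
  rmap P (prod.map f f) (hE.δ A) = hE.δ X

/-- `P`-surjective arrow. -/
def PSurj (hEx : IsExistential P) {X A : C} (f : X ⟶ A) : Prop :=
  hEx.E f (⊤ : Fib P X) = ⊤

/-- The product relation `ρ ⊠ σ` on `(A ⨯ B) ⨯ (A ⨯ B)`. -/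
def boxprod {A B : C} (ρ : Fib P (A ⨯ A)) (σ : Fib P (B ⨯ B)) :
    Fib P ((A ⨯ B) ⨯ (A ⨯ B)) :=
  rmap P (prod.map prod.fst prod.fst) ρ ⊓ rmap P (prod.map prod.snd prod.snd) σ

/-- The hom condition of the elementary quotient completion: `f : A ⟶ B`
represents an arrow `(A,ρ) ⟶ (B,σ)` iff `ρ ≤ P(f×f)(σ)`. -/
def QHomC {A B : C} (ρ : Fib P (A ⨯ A)) (σ : Fib P (B ⨯ B)) (f : A ⟶ B) : Prop :=
  ρ ≤ rmap P (prod.map f f) σ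

/-- The equivalence on representatives: `f ∼ g` iff `⊤ = P⟨f,g⟩(σ)`. -/
def QEq {A B : C} (σ : Fib P (B ⨯ B)) (f g : A ⟶ B) : Prop :=
  rmap P (prod.lift f g) σ = ⊤

/-! Every condition on `Q(P)` is read off at generalized elements `u, v : Y ⟶ A`: a descent
datum `β` for `ρ` satisfies `P u β ⊓ P⟨u,v⟩ ρ ≤ P v β`, and reflexivity, symmetry and
transitivity of `ρ` become the corresponding statements about `P⟨u,v⟩ ρ`. The fibered
equality of `Q(P)` is `ρ` itself: the adjunction of `P` transfers to `Q(P)` because `ρ ≥ δ`,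
and because descent data for the relation on `(X ⨯ A) ⨯ A` can move the last coordinate along
`ρ`. The quotient of `(A,ρ)` by `σ` is represented by the identity, whose universal property
reduces to reflexivity and symmetry. -/

section QuotientCompletion

variable {P}

set_option linter.unusedSectionVars false

attribute [local simp] prod.lift_fst prod.lift_snd prod.lift_fst_assoc prod.lift_snd_assoc

theorem rmap_comp {A B D : C} (f : A ⟶ B) (g : B ⟶ D) (x : Fib P D) :
    rmap P (f ≫ g) x = rmap P f (rmap P g x) := by
  simp only [rmap, op_comp, P.map_comp]; rfl

theorem rmap_rmap_of_comp_eq {A B D : C} {f : A ⟶ B} {g : B ⟶ D} {k : A ⟶ D}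
    (h : f ≫ g = k) (x : Fib P D) : rmap P f (rmap P g x) = rmap P k x := by
  rw [← h, rmap_comp]

theorem rmap_id {A : C} (x : Fib P A) : rmap P (𝟙 A) x = x := by
  simp only [rmap, op_id, P.map_id]; rfl

theorem rmap_inf {A B : C} (f : A ⟶ B) (x y : Fib P B) :
    rmap P f (x ⊓ y) = rmap P f x ⊓ rmap P f y :=
  map_inf (show InfTopHom _ _ from P.map f.op) x y

theorem rmap_top {A B : C} (f : A ⟶ B) : rmap P f (⊤ : Fib P B) = ⊤ :=
  map_top (show InfTopHom _ _ from P.map f.op)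

theorem rmap_mono {A B : C} (f : A ⟶ B) : Monotone (rmap P f) :=
  OrderHomClass.mono (show InfTopHom _ _ from P.map f.op)

theorem IsElementary.rmap_lift_self_δ_eq_top (hE : IsElementary P) {Y A : C} (g : Y ⟶ A) :
    rmap P (prod.lift g g) (hE.δ A) = ⊤ := by
  -- the unit of the adjunction at `⊤` says that `δ` holds on `⟨pr₂, pr₂⟩ : Y ⨯ A ⟶ A ⨯ A`
  have unit := (hE.adj Y A ⊤ (rmap P (prod.lift (prod.fst ≫ prod.snd) prod.snd) (hE.δ A))).mp
    inf_le_right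
  rw [rmap_rmap_of_comp_eq (k := prod.lift prod.snd prod.snd) (by ext <;> simp)] at unit
  rw [← rmap_rmap_of_comp_eq (f := prod.lift (𝟙 Y) g) (g := prod.lift prod.snd prod.snd)
    (by ext <;> simp), top_le_iff.mp unit, rmap_top]

theorem IsElementary.rmap_lift_self_eq_top_of_δ_le (hE : IsElementary P) {A : C}
    {ρ : Fib P (A ⨯ A)} (href : hE.δ A ≤ ρ) {Y : C} (g : Y ⟶ A) :
    rmap P (prod.lift g g) ρ = ⊤ :=
  top_le_iff.mp (hE.rmap_lift_self_δ_eq_top g ▸ rmap_mono _ href)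

namespace IsEqRel

variable {hE : IsElementary P} {A : C} {ρ : Fib P (A ⨯ A)}

theorem rmap_lift_comm (hρ : IsEqRel P hE ρ) {Y : C} (a b : Y ⟶ A) :
    rmap P (prod.lift a b) ρ = rmap P (prod.lift b a) ρ := by
  conv_lhs => rw [hρ.symm]
  exact rmap_rmap_of_comp_eq (k := prod.lift b a) (by ext <;> simp) ρ

theorem rmap_lift_trans (hρ : IsEqRel P hE ρ) {Y : C} (a b c : Y ⟶ A) :
    rmap P (prod.lift a b) ρ ⊓ rmap P (prod.lift b c) ρ ≤ rmap P (prod.lift a c) ρ := by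
  have h := rmap_mono (prod.lift (prod.lift a b) c) hρ.trans
  rwa [rmap_inf, rmap_rmap_of_comp_eq (prod.lift_fst _ _),
    rmap_rmap_of_comp_eq (k := prod.lift b c) (by ext <;> simp),
    rmap_rmap_of_comp_eq (k := prod.lift a c) (by ext <;> simp)] at h

end IsEqRel

theorem QEq.symm {hE : IsElementary P} {A B : C} {σ : Fib P (B ⨯ B)} (hσ : IsEqRel P hE σ)
    {f g : A ⟶ B} (hfg : QEq P σ f g) : QEq P σ g f :=
  (hσ.rmap_lift_comm g f).trans hfg

theorem rmap_lift_boxprod {A B Y : C} (ρ : Fib P (A ⨯ A)) (σ : Fib P (B ⨯ B))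
    (u v : Y ⟶ A ⨯ B) :
    rmap P (prod.lift u v) (boxprod P ρ σ) =
      rmap P (prod.lift (u ≫ prod.fst) (v ≫ prod.fst)) ρ ⊓
        rmap P (prod.lift (u ≫ prod.snd) (v ≫ prod.snd)) σ := by
  rw [boxprod, rmap_inf, rmap_rmap_of_comp_eq (prod.lift_map _ _ _ _),
    rmap_rmap_of_comp_eq (prod.lift_map _ _ _ _)]

theorem mem_des_iff {A : C} {ρ : Fib P (A ⨯ A)} {α : Fib P A} :
    α ∈ Des P ρ ↔
      ∀ {Y : C} (u v : Y ⟶ A), rmap P u α ⊓ rmap P (prod.lift u v) ρ ≤ rmap P v α := by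
  refine ⟨fun hα Y u v => ?_, fun h => ?_⟩
  · have h := rmap_mono (prod.lift u v) hα
    rwa [rmap_inf, rmap_rmap_of_comp_eq (prod.lift_fst _ _),
      rmap_rmap_of_comp_eq (prod.lift_snd _ _)] at h
  · have h := h (prod.fst : A ⨯ A ⟶ A) prod.snd
    rwa [prod.lift_fst_snd, rmap_id] at h

theorem rmap_eq_of_qEq {hE : IsElementary P} {A B : C} {σ : Fib P (B ⨯ B)}
    (hσ : IsEqRel P hE σ) {f g : A ⟶ B} (hfg : QEq P σ f g) {β : Fib P B}
    (hβ : β ∈ Des P σ) : rmap P f β = rmap P g β := by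
  apply le_antisymm
  · simpa [show rmap P (prod.lift f g) σ = ⊤ from hfg] using mem_des_iff.mp hβ f g
  · simpa [show rmap P (prod.lift g f) σ = ⊤ from hfg.symm hσ] using mem_des_iff.mp hβ g f

theorem rmap_mem_des {A B : C} {ρ : Fib P (A ⨯ A)} {σ : Fib P (B ⨯ B)} {f : A ⟶ B}
    (hf : QHomC P ρ σ f) {β : Fib P B} (hβ : β ∈ Des P σ) : rmap P f β ∈ Des P ρ := by
  refine mem_des_iff.mpr fun u v => ?_
  have hρσ : rmap P (prod.lift u v) ρ ≤ rmap P (prod.lift (u ≫ f) (v ≫ f)) σ := by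
    rw [← rmap_rmap_of_comp_eq (prod.lift_map _ _ _ _)]
    exact rmap_mono _ hf
  simpa only [rmap_comp] using (inf_le_inf_left _ hρσ).trans (mem_des_iff.mp hβ (u ≫ f) (v ≫ f))

theorem IsEqRel.mem_des_boxprod {hE : IsElementary P} {A : C} {ρ : Fib P (A ⨯ A)}
    (hρ : IsEqRel P hE ρ) : ρ ∈ Des P (boxprod P ρ ρ) := by
  refine mem_des_iff.mpr fun u v => ?_
  have coords {Y : C} (w : Y ⟶ A ⨯ A) :
      rmap P w ρ = rmap P (prod.lift (w ≫ prod.fst) (w ≫ prod.snd)) ρ := by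
    congr 1; ext <;> simp
  rw [coords u, coords v, rmap_lift_boxprod, hρ.rmap_lift_comm (u ≫ prod.fst) (v ≫ prod.fst)]
  -- `v₁ ρ u₁`, `u₁ ρ u₂` and `u₂ ρ v₂` give `v₁ ρ v₂`
  calc _ ≤ (rmap P (prod.lift (v ≫ prod.fst) (u ≫ prod.fst)) ρ ⊓
          rmap P (prod.lift (u ≫ prod.fst) (u ≫ prod.snd)) ρ) ⊓
        rmap P (prod.lift (u ≫ prod.snd) (v ≫ prod.snd)) ρ :=
        le_inf (le_inf (inf_le_right.trans inf_le_left) inf_le_left)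
          (inf_le_right.trans inf_le_right)
    _ ≤ _ := (inf_le_inf_right _ (hρ.rmap_lift_trans _ _ _)).trans (hρ.rmap_lift_trans _ _ _)

theorem IsElementary.adj_of_mem_des (hE : IsElementary P) {X A : C} {θ : Fib P (X ⨯ X)}
    {ρ : Fib P (A ⨯ A)} (hθ : hE.δ X ≤ θ) (hρ : hE.δ A ≤ ρ) (α : Fib P (X ⨯ A))
    {β : Fib P ((X ⨯ A) ⨯ A)} (hβ : β ∈ Des P (boxprod P (boxprod P θ ρ) ρ)) :
    rmap P (prod.fst : (X ⨯ A) ⨯ A ⟶ X ⨯ A) α ⊓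
        rmap P (prod.lift (prod.fst ≫ prod.snd) prod.snd : (X ⨯ A) ⨯ A ⟶ A ⨯ A) ρ ≤ β ↔
      α ≤ rmap P (prod.lift (𝟙 (X ⨯ A)) prod.snd : X ⨯ A ⟶ (X ⨯ A) ⨯ A) β := by
  refine ⟨fun h => (hE.adj X A α β).mp ((inf_le_inf_left _ (rmap_mono _ hρ)).trans h),
    fun h => ?_⟩
  -- `β` at `(x, a, a)` propagates to `(x, a, a')` along `a ρ a'`
  set u : (X ⨯ A) ⨯ A ⟶ (X ⨯ A) ⨯ A := prod.fst ≫ prod.lift (𝟙 (X ⨯ A)) prod.snd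
  have hu : rmap P prod.fst α ≤ rmap P u β := by
    rw [rmap_comp]; exact rmap_mono _ h
  have hrel : rmap P (prod.lift u (𝟙 _)) (boxprod P (boxprod P θ ρ) ρ) =
      rmap P (prod.lift (prod.fst ≫ prod.snd) prod.snd) ρ := by
    simp [u, rmap_lift_boxprod, hE.rmap_lift_self_eq_top_of_δ_le hθ,
      hE.rmap_lift_self_eq_top_of_δ_le hρ]
  have hd := mem_des_iff.mp hβ u (𝟙 _)
  rw [hrel, rmap_id] at hd
  exact (inf_le_inf_right _ hu).trans hd

end QuotientCompletion

/-- The elementary quotient completion `Q(P)`, with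
`Q(P)(A,ρ) = Des ρ` and reindexing by representatives, is well defined, is an
elementary doctrine with fibered equality `δ_{(A,ρ)} = ρ`, and has effective
quotients given by `[id] : (A,ρ) ⟶ (A,σ)`. -/
theorem quotient_completion_doctrine (hE : IsElementary P) :
    (∀ {A B : C} (ρ : Fib P (A ⨯ A)) (σ : Fib P (B ⨯ B)),
      IsEqRel P hE ρ → IsEqRel P hE σ →
      ∀ f g : A ⟶ B, QHomC P ρ σ f → QHomC P ρ σ g → QEq P σ f g →
        ∀ β ∈ Des P σ, rmap P f β = rmap P g β) ∧
    (∀ {A B : C} (ρ : Fib P (A ⨯ A)) (σ : Fib P (B ⨯ B)),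
      IsEqRel P hE ρ → IsEqRel P hE σ →
      ∀ f : A ⟶ B, QHomC P ρ σ f → ∀ β ∈ Des P σ, rmap P f β ∈ Des P ρ) ∧
    (∀ {A : C} (ρ : Fib P (A ⨯ A)), IsEqRel P hE ρ → ρ ∈ Des P (boxprod P ρ ρ)) ∧
    (∀ {X A : C} (θ : Fib P (X ⨯ X)) (ρ : Fib P (A ⨯ A)),
      IsEqRel P hE θ → IsEqRel P hE ρ →
      ∀ (α : Fib P (X ⨯ A)) (β : Fib P ((X ⨯ A) ⨯ A)),
        α ∈ Des P (boxprod P θ ρ) → β ∈ Des P (boxprod P (boxprod P θ ρ) ρ) →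
        ((rmap P (prod.fst : (X ⨯ A) ⨯ A ⟶ X ⨯ A) α ⊓
            rmap P (prod.lift (prod.fst ≫ prod.snd) prod.snd :
              (X ⨯ A) ⨯ A ⟶ A ⨯ A) ρ ≤ β)
          ↔ α ≤ rmap P (prod.lift (𝟙 (X ⨯ A)) prod.snd : X ⨯ A ⟶ (X ⨯ A) ⨯ A) β)) ∧
    (∀ {A : C} (ρ σ : Fib P (A ⨯ A)), IsEqRel P hE ρ → IsEqRel P hE σ → ρ ≤ σ →
      σ ∈ Des P (boxprod P ρ ρ) →
      (σ = rmap P (prod.map (𝟙 A) (𝟙 A)) σ) ∧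
      ∀ {B : C} (τ : Fib P (B ⨯ B)), IsEqRel P hE τ →
        ∀ f : A ⟶ B, QHomC P σ τ f →
          ∃ h : A ⟶ B, QHomC P σ τ h ∧ QEq P τ h f ∧
            ∀ h' : A ⟶ B, QHomC P σ τ h' → QEq P τ h' f → QEq P τ h h') := by
  refine ⟨fun _ _ _ hσ _ _ _ _ hfg _ hβ => rmap_eq_of_qEq hσ hfg hβ,
    fun _ _ _ _ _ hf _ hβ => rmap_mem_des hf hβ,
    fun _ hρ => hρ.mem_des_boxprod,
    fun _ _ hθ hρ α _ _ hβ => hE.adj_of_mem_des hθ.refl hρ.refl α hβ,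
    fun _ _ _ _ _ _ => ⟨?_, fun τ hτ f hf => ?_⟩⟩
  · rw [prod.map_id_id, rmap_id]
  · exact ⟨f, hf, hE.rmap_lift_self_eq_top_of_δ_le hτ.refl f, fun _ _ hh' => hh'.symm hτ⟩

end DoctrinePaper
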